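/- Let Y be a sub-f-algebra of an f-algebra E that is a projection band in E. If a net (y_α) in Y mo-converges to 0 in Y, then it mo-converges to 0 in E. -/

import Mathlib

universe u v w

/-- A (not necessarily unital) `f`-algebra: a vector lattice over `ℝ` with an associative
multiplication such that products of positive elements are positive and `x ⊓ y = 0` implies
`(x*z) ⊓ y = (z*x) ⊓ y = 0` for every positive `z`. -/
class FAlgebra (E : Type u) extends Lattice E, NonUnitalRing E, Module ℝ E where
  add_le_add_left' : ∀ a b : E, a ≤ b → ∀ c : E, c + a ≤ c + b
  smul_nonneg' : ∀ (r : ℝ) (x : E), 0 ≤ r → 0 ≤ x → 0 ≤ r • x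
  mul_nonneg' : ∀ x y : E, 0 ≤ x → 0 ≤ y → 0 ≤ x * y
  f_inf : ∀ x y z : E, x ⊓ y = 0 → 0 ≤ z → (x * z) ⊓ y = 0 ∧ (z * x) ⊓ y = 0

variable {E : Type u}

/-- Order convergence of a net `x` to `l`: there is a net `y` on some directed index set,
decreasing with infimum `0`, eventually dominating `|x a - l|`. -/
def OrderConvTo [Lattice E] [AddCommGroup E] {ι : Type v} [Preorder ι]
    (x : ι → E) (l : E) : Prop :=
  ∃ (κ : Type u) (P : Preorder κ) (y : κ → E),
    Nonempty κ ∧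
    (∀ a b : κ, ∃ c : κ, P.le a c ∧ P.le b c) ∧
    (∀ a b : κ, P.le a b → y b ≤ y a) ∧
    IsGLB (Set.range y) 0 ∧
    (∀ b : κ, ∃ a₀ : ι, ∀ a : ι, a₀ ≤ a → |x a - l| ≤ y b)

/-- Multiplicative order (mo-) convergence in an `f`-algebra:
`|x_α - l| * u` order converges to `0` for every positive `u`. -/
def MOConvTo [FAlgebra E] {ι : Type v} [Preorder ι] (x : ι → E) (l : E) : Prop :=
  ∀ u : E, 0 ≤ u → OrderConvTo (fun a => |x a - l| * u) 0

/-- An `f`-algebra is infinite distributive if multiplication by a positive element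
preserves existing infima of sets of positive elements. -/
def InfDistrib (E : Type u) [FAlgebra E] : Prop :=
  ∀ A : Set E, (∀ a ∈ A, (0 : E) ≤ a) → ∀ m : E, IsGLB A m →
    ∀ u : E, 0 ≤ u → IsGLB ((fun a => u * a) '' A) (u * m)

/-- Archimedean property: `(1/n)x ↓ 0` for every positive `x`. -/
def ArchimedeanVL (E : Type u) [FAlgebra E] : Prop :=
  ∀ x : E, 0 ≤ x → IsGLB (Set.range fun n : ℕ => ((n : ℝ) + 1)⁻¹ • x) 0

/-- A multiplicative unit. -/
def IsMulUnit [FAlgebra E] (e : E) : Prop := ∀ x : E, e * x = x ∧ x * e = x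

/-- Order convergence relative to a sublattice-subspace `S` of `E`: the dominating
decreasing net lies in `S` and its infimum computed within `S` is `0`. -/
def OrderConvToIn [FAlgebra E] (S : Set E) {ι : Type v} [Preorder ι]
    (x : ι → E) (l : E) : Prop :=
  ∃ (κ : Type u) (P : Preorder κ) (y : κ → E),
    Nonempty κ ∧
    (∀ a b : κ, ∃ c : κ, P.le a c ∧ P.le b c) ∧
    (∀ b : κ, y b ∈ S) ∧
    (∀ a b : κ, P.le a b → y b ≤ y a) ∧
    (∀ b : κ, 0 ≤ y b) ∧
    (∀ z ∈ S, (∀ b : κ, z ≤ y b) → z ≤ 0) ∧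
    (∀ b : κ, ∃ a₀ : ι, ∀ a : ι, a₀ ≤ a → |x a - l| ≤ y b)

/-- mo-convergence computed within a sub-`f`-algebra `S` of `E`. -/
def MOConvToIn [FAlgebra E] (S : Set E) {ι : Type v} [Preorder ι]
    (x : ι → E) (l : E) : Prop :=
  ∀ u ∈ S, 0 ≤ u → OrderConvToIn S (fun a => |x a - l| * u) 0

/-- A sub-`f`-algebra (as a set): a vector-sublattice closed under multiplication. -/
def IsSubFAlgebra [FAlgebra E] (Y : Set E) : Prop :=
  (0 : E) ∈ Y ∧ (∀ x ∈ Y, ∀ y ∈ Y, x + y ∈ Y) ∧ (∀ r : ℝ, ∀ x ∈ Y, r • x ∈ Y) ∧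
  (∀ x ∈ Y, -x ∈ Y) ∧ (∀ x ∈ Y, ∀ y ∈ Y, x * y ∈ Y) ∧ (∀ x ∈ Y, ∀ y ∈ Y, x ⊔ y ∈ Y)

/-- An order ideal (solid subspace). -/
def IsOrderIdeal [FAlgebra E] (I : Set E) : Prop :=
  (0 : E) ∈ I ∧ (∀ x ∈ I, ∀ y ∈ I, x + y ∈ I) ∧ (∀ r : ℝ, ∀ x ∈ I, r • x ∈ I) ∧
  (∀ x y : E, |x| ≤ |y| → y ∈ I → x ∈ I)

/-- mo-KB-space: every order bounded increasing net of positive elements is mo-convergent. -/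
def MOKB (E : Type u) [FAlgebra E] : Prop :=
  ∀ (ι : Type u) (P : Preorder ι), Nonempty ι →
    (∀ a b : ι, ∃ c : ι, P.le a c ∧ P.le b c) →
    ∀ x : ι → E, (∀ a b : ι, P.le a b → x a ≤ x b) → (∀ a, 0 ≤ x a) →
      (∃ z : E, ∀ a, x a ≤ z) → ∃ l : E, @MOConvTo E _ ι P x l

/-- mo-continuity: every net order converging to `0` mo-converges to `0`. -/
def MOContinuous (E : Type u) [FAlgebra E] : Prop :=
  ∀ (ι : Type u) (P : Preorder ι), Nonempty ι →
    (∀ a b : ι, ∃ c : ι, P.le a c ∧ P.le b c) →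
    ∀ x : ι → E, @OrderConvTo E _ _ ι P x 0 → @MOConvTo E _ ι P x 0

/-- Order (Dedekind) completeness. -/
def OrderCompleteVL (E : Type u) [FAlgebra E] : Prop :=
  ∀ A : Set E, A.Nonempty → BddAbove A → ∃ m : E, IsLUB A m
/-!
Decompose a positive `u` along the band as `u = u_Y + u_d`. Each `|y_α|` lies in `Y` and is
therefore disjoint from `u_d`, so `|y_α| u_d = 0` and `|y_α| u ≤ |y_α| |u_Y|`, which is order null
in `Y` by hypothesis. Since `Y` is solid, any lower bound in `E` of a positive net of `Y` has its
positive part in `Y`, so an infimum `0` computed in `Y` is also the infimum in `E`.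
-/

theorem inf_eq_zero_of_le_of_le {α : Type*} [Lattice α] [Zero α] {a b c d : α}
    (ha : 0 ≤ a) (hb : 0 ≤ b) (hac : a ≤ c) (hbd : b ≤ d) (hcd : c ⊓ d = 0) : a ⊓ b = 0 :=
  le_antisymm (hcd ▸ inf_le_inf hac hbd) (le_inf ha hb)

namespace FAlgebra

variable {E : Type u} [FAlgebra E]

instance : AddLeftMono E := ⟨fun c _ _ h => add_le_add_left' _ _ h c⟩

theorem mul_le_mul_of_nonneg_left {a b c : E} (hab : a ≤ b) (hc : 0 ≤ c) : c * a ≤ c * b := by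
  simpa only [mul_sub, sub_nonneg] using mul_nonneg' c (b - a) hc (sub_nonneg.mpr hab)

theorem mul_eq_zero_of_inf_eq_zero {x z : E} (hx : 0 ≤ x) (hz : 0 ≤ z) (hxz : x ⊓ z = 0) :
    x * z = 0 := by
  have hxz_z : (x * z) ⊓ z = 0 := (f_inf x z z hxz hz).1
  have hxz_xz : (x * z) ⊓ (x * z) = 0 := (f_inf z (x * z) x (by rwa [inf_comm]) hx).2
  rwa [inf_idem] at hxz_xz

theorem mul_eq_zero_of_abs_inf_abs_eq_zero {x z : E} (h : |x| ⊓ |z| = 0) : x * z = 0 := by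
  have part_le_abs : ∀ a : E, a⁺ ≤ |a| ∧ a⁻ ≤ |a| := fun a => by
    rw [← posPart_add_negPart]
    exact ⟨le_add_of_nonneg_right (negPart_nonneg a), le_add_of_nonneg_left (posPart_nonneg a)⟩
  have parts : ∀ a b : E, 0 ≤ a → 0 ≤ b → a ≤ |x| → b ≤ |z| → a * b = 0 :=
    fun a b ha hb hax hbz =>
      mul_eq_zero_of_inf_eq_zero ha hb (inf_eq_zero_of_le_of_le ha hb hax hbz h)
  rw [← posPart_sub_negPart x, ← posPart_sub_negPart z, sub_mul, mul_sub, mul_sub]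
  rw [parts _ _ (posPart_nonneg x) (posPart_nonneg z) (part_le_abs x).1 (part_le_abs z).1,
    parts _ _ (posPart_nonneg x) (negPart_nonneg z) (part_le_abs x).1 (part_le_abs z).2,
    parts _ _ (negPart_nonneg x) (posPart_nonneg z) (part_le_abs x).2 (part_le_abs z).1,
    parts _ _ (negPart_nonneg x) (negPart_nonneg z) (part_le_abs x).2 (part_le_abs z).2]
  simp

end FAlgebra

theorem OrderConvTo.of_abs_sub_le {E : Type u} [Lattice E] [AddCommGroup E] {ι : Type v}
    [Preorder ι] {x x' : ι → E} {l l' : E} (h : OrderConvTo x l)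
    (hle : ∀ a, |x' a - l'| ≤ |x a - l|) : OrderConvTo x' l' := by
  obtain ⟨κ, P, w, hne, hdir, hanti, hglb, hev⟩ := h
  refine ⟨κ, P, w, hne, hdir, hanti, hglb, fun b => ?_⟩
  obtain ⟨a₀, ha₀⟩ := hev b
  exact ⟨a₀, fun a ha => (hle a).trans (ha₀ a ha)⟩

theorem OrderConvToIn.orderConvTo_of_solid {E : Type u} [FAlgebra E] {S : Set E}
    (hS : ∀ a b : E, |a| ≤ |b| → b ∈ S → a ∈ S) {ι : Type v} [Preorder ι] {x : ι → E} {l : E}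
    (h : OrderConvToIn S x l) : OrderConvTo x l := by
  obtain ⟨κ, P, w, hne, hdir, hwS, hanti, hpos, hinf, hev⟩ := h
  refine ⟨κ, P, w, hne, hdir, hanti, ⟨?_, fun z hz => ?_⟩, hev⟩
  · rintro _ ⟨b, rfl⟩
    exact hpos b
  · obtain ⟨b⟩ := hne
    have hz_le : ∀ c, z⁺ ≤ w c := fun c => sup_le (hz ⟨c, rfl⟩) (hpos c)
    have hz_mem : z⁺ ∈ S := hS _ _ (by
      rw [abs_of_nonneg (posPart_nonneg z), abs_of_nonneg (hpos b)]
      exact hz_le b) (hwS b)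
    exact (le_posPart z).trans (hinf _ hz_mem hz_le)

open FAlgebra in
theorem stmt18_general {E : Type u} [FAlgebra E] (Y : Set E)
    (hsolid : ∀ a b : E, |a| ≤ |b| → b ∈ Y → a ∈ Y)
    (hproj : ∀ x : E, ∃ y z : E, y ∈ Y ∧ (∀ w ∈ Y, |z| ⊓ |w| = 0) ∧ x = y + z)
    {ι : Type v} [Preorder ι]
    (y : ι → E) (hyY : ∀ a, y a ∈ Y)
    (h : MOConvToIn Y y (0 : E)) : MOConvTo y (0 : E) := by
  intro u hu
  obtain ⟨uY, ud, huY, hud, rfl⟩ := hproj u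
  have huY_abs : |uY| ∈ Y := hsolid _ _ (abs_abs uY).le huY
  refine ((h |uY| huY_abs (abs_nonneg uY)).orderConvTo_of_solid hsolid).of_abs_sub_le
    fun a => ?_
  have hud_zero : |y a| * ud = 0 := mul_eq_zero_of_abs_inf_abs_eq_zero (by
    rw [abs_abs, inf_comm]
    exact hud _ (hyY a))
  simp only [sub_zero]
  rw [abs_of_nonneg (mul_nonneg' _ _ (abs_nonneg _) hu),
    abs_of_nonneg (mul_nonneg' _ _ (abs_nonneg _) (abs_nonneg _)), mul_add, hud_zero, add_zero]
  exact mul_le_mul_of_nonneg_left (le_abs_self uY) (abs_nonneg _)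

/-- for a sub-`f`-algebra `Y` which is a projection band in `E`,
mo-convergence to `0` in `Y` implies mo-convergence to `0` in `E`. -/
theorem stmt18 {E : Type u} [FAlgebra E] (Y : Set E) (hY : IsSubFAlgebra Y)
    (hsolid : ∀ a b : E, |a| ≤ |b| → b ∈ Y → a ∈ Y)
    (hproj : ∀ x : E, ∃ y z : E, y ∈ Y ∧ (∀ w ∈ Y, |z| ⊓ |w| = 0) ∧ x = y + z)
    {ι : Type v} [Preorder ι] (hne : Nonempty ι)
    (hdir : ∀ a b : ι, ∃ c : ι, a ≤ c ∧ b ≤ c)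
    (y : ι → E) (hyY : ∀ a, y a ∈ Y)
    (h : MOConvToIn Y y (0 : E)) : MOConvTo y (0 : E) :=
  stmt18_general Y hsolid hproj y hyY h
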